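/- arXiv:2302.13091 — 3 statements merged into one kernel-verified Lean document; each statement's English description precedes it below -/
import Mathlib

section
/- Symmetry property: if i, j ∈ N, i ≠ j, and for all S ⊆ N \ {i, j}, v(S ∪ {i}) = v(S ∪ {j}), then for all S ⊆ N \ {i, j}, I(S ∪ {i}) = I(S ∪ {j}). -/
/- The dividend of `S ∪ {i}` is the alternating sum over `T ⊆ S` of the marginal contributions
`v (T ∪ {i}) - v T`; if `i` and `j` have the same marginal contributions, the two dividends agree
term by term. -/

open Finset

/-- The Harsanyi dividend of a game `v` on subsets of `Fin n`. -/
def harsanyi {n : ℕ} (v : Finset (Fin n) → ℝ) (S : Finset (Fin n)) : ℝ :=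
  ∑ T ∈ S.powerset, (-1 : ℝ) ^ (S.card - T.card) * v T

theorem harsanyi_insert {n : ℕ} (v : Finset (Fin n) → ℝ) {i : Fin n} {S : Finset (Fin n)}
    (hi : i ∉ S) :
    harsanyi v (insert i S) =
      ∑ T ∈ S.powerset, (-1 : ℝ) ^ (S.card - T.card) * (v (insert i T) - v T) := by
  unfold harsanyi
  rw [sum_powerset_insert hi, card_insert_of_notMem hi, ← sum_add_distrib]
  refine sum_congr rfl fun T hT => ?_
  have hTS : T ⊆ S := mem_powerset.mp hT
  have hiT : i ∉ T := fun h => hi (hTS h)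
  have hcard : T.card ≤ S.card := card_le_card hTS
  rw [card_insert_of_notMem hiT, Nat.add_sub_add_right, Nat.succ_sub hcard, pow_succ]
  ring

theorem harsanyi_symmetry_general {n : ℕ} (v : Finset (Fin n) → ℝ) (i j : Fin n)
    (hsym : ∀ S : Finset (Fin n), i ∉ S → j ∉ S → v (insert i S) = v (insert j S)) :
    ∀ S : Finset (Fin n), i ∉ S → j ∉ S →
      harsanyi v (insert i S) = harsanyi v (insert j S) := by
  intro S hi hj
  rw [harsanyi_insert v hi, harsanyi_insert v hj]
  refine sum_congr rfl fun T hT => ?_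
  have hTS : T ⊆ S := mem_powerset.mp hT
  rw [hsym T (fun h => hi (hTS h)) (fun h => hj (hTS h))]

/-- Symmetry property: if `i` and `j` contribute to every coalition in the same way,
then `I(S ∪ {i}) = I(S ∪ {j})` for all `S ⊆ N \ {i, j}`. -/
theorem harsanyi_symmetry {n : ℕ} (v : Finset (Fin n) → ℝ) (i j : Fin n) (hij : i ≠ j)
    (hsym : ∀ S : Finset (Fin n), i ∉ S → j ∉ S → v (insert i S) = v (insert j S)) :
    ∀ S : Finset (Fin n), i ∉ S → j ∉ S →
      harsanyi v (insert i S) = harsanyi v (insert j S) :=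
  harsanyi_symmetry_general v i j hsym
end

section
/- Under the hypotheses of the previous statement with each ε_i having E[ε_i^2] = δ² > 0, the second-order moment E[π̂²] = Π_{i∈S} (1 + Σ_{m=1}^{κ_i} C(2κ_i,2m) τ^{-2m} E[ε_i^{2m}]) is at least (1 + κ_1_min·δ²/τ²)^{|S|} where each factor exceeds 1; in particular E[π̂²] grows at least exponentially in |S|: E[π̂²] ≥ (1 + δ²/τ²)^{|S|}. -/
/-!
Expanding `(1 + X/τ)^(2κ)` binomially, the odd moments vanish and the even ones are nonnegative,
so dropping every term but `k = 0` and `k = 2` gives `E[(1 + X/τ)^(2κ)] ≥ 1 + C(2κ, 2) δ²/τ² ≥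
1 + δ²/τ²`. Since `π̂² = ∏ (1 + ε_i/τ)^(2κ_i)` is a product of independent factors, its expectation
is the product of these per-factor bounds.
-/

open MeasureTheory ProbabilityTheory Finset

lemma ProbabilityTheory.iIndepFun.integral_finsetProd_comp {Ω ι : Type*} [MeasurableSpace Ω]
    {μ : Measure Ω} {X : ι → Ω → ℝ} {f : ι → ℝ → ℝ} (hX : iIndepFun X μ)
    (mX : ∀ i, AEMeasurable (X i) μ) (hf : ∀ i, Continuous (f i)) (s : Finset ι) :
    ∫ ω, ∏ i ∈ s, f i (X i ω) ∂μ = ∏ i ∈ s, ∫ ω, f i (X i ω) ∂μ := by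
  have hXs : iIndepFun (fun i : s => X i) μ := hX.precomp Subtype.val_injective
  have hcoe : ∀ ω, ∏ i ∈ s, f i (X i ω) = ∏ i : s, f i (X i ω) := fun ω =>
    (prod_coe_sort s fun i => f i (X i ω)).symm
  simp only [hcoe, ← prod_coe_sort s fun i => ∫ ω, f i (X i ω) ∂μ]
  exact hXs.integral_fun_prod_comp (fun i => mX i) fun i => (hf i).aestronglyMeasurable

section Moments

variable {Ω : Type*} [MeasurableSpace Ω] {μ : Measure Ω} {X : Ω → ℝ}

lemma integral_one_add_mul_pow (hX : ∀ k : ℕ, Integrable (fun ω => X ω ^ k) μ) (c : ℝ) (N : ℕ) :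
    ∫ ω, (1 + c * X ω) ^ N ∂μ =
      ∑ k ∈ range (N + 1), c ^ k * N.choose k * ∫ ω, X ω ^ k ∂μ := by
  have hexpand : ∀ ω, (1 + c * X ω) ^ N = ∑ k ∈ range (N + 1), c ^ k * N.choose k * X ω ^ k := by
    intro ω
    rw [add_comm, add_pow]
    exact sum_congr rfl fun k _ => by ring
  simp_rw [hexpand]
  rw [integral_finsetSum _ fun k _ => (hX k).const_mul _]
  simp_rw [integral_const_mul]

lemma integral_pow_nonneg_of_even {k : ℕ} (hk : Even k) : 0 ≤ ∫ ω, X ω ^ k ∂μ :=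
  integral_nonneg fun ω => hk.pow_nonneg (X ω)

lemma one_add_sq_mul_integral_sq_le_integral_one_add_mul_pow [IsProbabilityMeasure μ]
    (hX : ∀ k : ℕ, Integrable (fun ω => X ω ^ k) μ)
    (hodd : ∀ m : ℕ, ∫ ω, X ω ^ (2 * m + 1) ∂μ = 0) (c : ℝ) {κ : ℕ} (hκ : 1 ≤ κ) :
    1 + c ^ 2 * ∫ ω, X ω ^ 2 ∂μ ≤ ∫ ω, (1 + c * X ω) ^ (2 * κ) ∂μ := by
  rw [integral_one_add_mul_pow hX]
  set term := fun k => c ^ k * ((2 * κ).choose k : ℝ) * ∫ ω, X ω ^ k ∂μ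
  have hterm_nonneg : ∀ k, 0 ≤ term k := by
    intro k
    rcases Nat.even_or_odd k with hk | ⟨m, rfl⟩
    · exact mul_nonneg (mul_nonneg (hk.pow_nonneg c) (Nat.cast_nonneg _))
        (integral_pow_nonneg_of_even hk)
    · simp only [term, hodd m, mul_zero, le_refl]
  have hdrop : term 0 + term 2 ≤ ∑ k ∈ range (2 * κ + 1), term k := by
    rw [← sum_pair (show (0 : ℕ) ≠ 2 by decide)]
    refine sum_le_sum_of_subset_of_nonneg ?_ fun k _ _ => hterm_nonneg k
    intro k hk
    simp only [mem_insert, mem_singleton, mem_range] at hk ⊢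
    omega
  have hchoose : (1 : ℝ) ≤ (2 * κ).choose 2 := by exact_mod_cast Nat.choose_pos (by omega)
  have hsecond : c ^ 2 * ∫ ω, X ω ^ 2 ∂μ ≤ term 2 := by
    have h := mul_le_mul_of_nonneg_left hchoose
      (mul_nonneg (sq_nonneg c) (integral_pow_nonneg_of_even (μ := μ) (X := X) even_two))
    simp only [term]
    linarith
  have hzeroth : term 0 = 1 := by simp [term]
  linarith

end Moments

theorem and_interaction_second_moment_exponential_general {n : ℕ} {Ω : Type*} [MeasurableSpace Ω]
    (μ : Measure Ω) [IsProbabilityMeasure μ] (ε : Fin n → Ω → ℝ)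
    (hindep : iIndepFun ε μ)
    (hint : ∀ i, ∀ m : ℕ, Integrable (fun ω => ε i ω ^ m) μ)
    (hodd : ∀ i, ∀ m : ℕ, ∫ ω, ε i ω ^ (2 * m + 1) ∂μ = 0)
    (S : Finset (Fin n)) (κ : Fin n → ℕ) (hκ : ∀ i ∈ S, 1 ≤ κ i)
    (τ : ℝ) (δ : ℝ)
    (hvar : ∀ i, ∫ ω, ε i ω ^ 2 ∂μ = δ ^ 2) :
    (1 + δ ^ 2 / τ ^ 2) ^ S.card ≤
      ∫ ω, (∏ i ∈ S, (1 + ε i ω / τ) ^ (κ i)) ^ 2 ∂μ := by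
  have hmeas : ∀ i, AEMeasurable (ε i) μ := fun i => by
    simpa only [pow_one] using (hint i 1).aestronglyMeasurable.aemeasurable
  calc (1 + δ ^ 2 / τ ^ 2) ^ S.card = ∏ i ∈ S, (1 + τ⁻¹ ^ 2 * ∫ ω, ε i ω ^ 2 ∂μ) := by
        simp only [hvar, prod_const, inv_pow, inv_mul_eq_div]
    _ ≤ ∏ i ∈ S, ∫ ω, (1 + τ⁻¹ * ε i ω) ^ (2 * κ i) ∂μ :=
        prod_le_prod (fun i _ => by positivity) fun i hi =>
          one_add_sq_mul_integral_sq_le_integral_one_add_mul_pow (hint i) (hodd i) _ (hκ i hi)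
    _ = ∫ ω, ∏ i ∈ S, (1 + τ⁻¹ * ε i ω) ^ (2 * κ i) ∂μ :=
        (hindep.integral_finsetProd_comp (f := fun i x => (1 + τ⁻¹ * x) ^ (2 * κ i)) hmeas
          (fun i => by fun_prop) S).symm
    _ = ∫ ω, (∏ i ∈ S, (1 + ε i ω / τ) ^ (κ i)) ^ 2 ∂μ := by
        simp only [← prod_pow, ← pow_mul, mul_comm 2, inv_mul_eq_div]

/-- Exponential growth of the second-order moment with the order `|S|`: under the same
hypotheses as before, with each `E[ε_i²] = δ² > 0`, one has
`E[π̂²] ≥ (1 + δ²/τ²)^{|S|}`. -/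
theorem and_interaction_second_moment_exponential {n : ℕ} {Ω : Type*} [MeasurableSpace Ω]
    (μ : Measure Ω) [IsProbabilityMeasure μ] (ε : Fin n → Ω → ℝ)
    (hmeas : ∀ i, Measurable (ε i))
    (hindep : iIndepFun ε μ)
    (hint : ∀ i, ∀ m : ℕ, Integrable (fun ω => ε i ω ^ m) μ)
    (hodd : ∀ i, ∀ m : ℕ, ∫ ω, ε i ω ^ (2 * m + 1) ∂μ = 0)
    (S : Finset (Fin n)) (κ : Fin n → ℕ) (hκ : ∀ i ∈ S, 1 ≤ κ i)
    (τ : ℝ) (hτ : 0 < τ) (δ : ℝ) (hδ : 0 < δ)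
    (hvar : ∀ i, ∫ ω, ε i ω ^ 2 ∂μ = δ ^ 2) :
    (1 + δ ^ 2 / τ ^ 2) ^ S.card ≤
      ∫ ω, (∏ i ∈ S, (1 + ε i ω / τ) ^ (κ i)) ^ 2 ∂μ :=
  and_interaction_second_moment_exponential_general μ ε hindep hint hodd S κ hκ τ δ hvar
end

section
/- For a multivariate polynomial v : ℝⁿ → ℝ and baseline b ∈ ℝⁿ, the Harsanyi dividend of the masked inputs equals the sum of the Taylor coefficients supported exactly on S: I(S|x) = Σ_{κ ∈ Q_S} C(κ)·∇_v(κ)·Π_{i=1}^n (x_i − b_i)^{κ_i}, where Q_S = {κ ∈ ℕⁿ : κ_i ≥ 1 for i ∈ S, κ_i = 0 for i ∉ S}, I(S|x) = Σ_{T ⊆ S} (-1)^{|S|-|T|} v(x_T), and x_T has (x_T)_i = x_i for i ∈ T and (x_T)_i = b_i otherwise. -/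
/-!
Both sides are linear in `v`, so it suffices to treat one monomial `∏ i, (y i - b i) ^ κ i`.
On the masked input `x_T` it vanishes unless `T` contains the support `K` of `κ`, where it takes
the value at `x`; and the alternating sum `∑_{K ⊆ T ⊆ S} (-1)^{|S| - |T|}` is `1` if `K = S`
and `0` otherwise.
-/

open Finset

/-- The masked sample `x_T`: coordinates in `T` keep their value, others are set to the
baseline `b`. -/
def mask {n : ℕ} (x b : Fin n → ℝ) (T : Finset (Fin n)) : Fin n → ℝ :=
  fun i => if i ∈ T then x i else b i

def harsanyiDividend {ι R : Type*} [CommRing R] (f : Finset ι → R) (S : Finset ι) : R :=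
  ∑ T ∈ S.powerset, (-1) ^ (#S - #T) * f T

section Dividend

variable {ι R : Type*} [CommRing R]

lemma harsanyiDividend_sum {α : Type*} (s : Finset α) (f : α → Finset ι → R) (S : Finset ι) :
    harsanyiDividend (fun T => ∑ k ∈ s, f k T) S = ∑ k ∈ s, harsanyiDividend (f k) S := by
  simp only [harsanyiDividend, mul_sum]
  exact sum_comm

variable [DecidableEq ι]

lemma sum_powerset_superset_neg_one_pow_card_sub {K S : Finset ι} (hKS : K ⊆ S) :
    ∑ T ∈ S.powerset with K ⊆ T, (-1 : R) ^ (#S - #T) = ∑ U ∈ (S \ K).powerset, (-1) ^ #U := by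
  refine sum_bij' (fun T _ => S \ T) (fun U _ => S \ U) ?_ ?_ ?_ ?_ ?_ <;> intro T hT <;>
    simp only [mem_filter, mem_powerset] at hT ⊢
  · exact sdiff_subset_sdiff le_rfl hT.2
  · exact ⟨sdiff_subset, subset_sdiff.2 ⟨hKS, disjoint_of_subset_right hT disjoint_sdiff⟩⟩
  · exact Finset.sdiff_sdiff_eq_self hT.1
  · exact Finset.sdiff_sdiff_eq_self (hT.trans sdiff_subset)
  · rw [card_sdiff_of_subset hT.1]

lemma sum_powerset_superset_neg_one_pow_card_sub_eq_ite (K S : Finset ι) :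
    ∑ T ∈ S.powerset with K ⊆ T, (-1 : R) ^ (#S - #T) = if K = S then 1 else 0 := by
  by_cases hKS : K ⊆ S
  · have h := congrArg (Int.cast : ℤ → R) (sum_powerset_neg_one_pow_card (x := S \ K))
    push_cast at h
    rw [sum_powerset_superset_neg_one_pow_card_sub hKS, h]
    simp only [sdiff_eq_empty_iff_subset]
    exact if_congr ⟨hKS.antisymm, fun h => h.ge⟩ rfl rfl
  · rw [filter_false_of_mem fun T hT hKT => hKS (hKT.trans (mem_powerset.1 hT)),
      if_neg fun h => hKS h.le, sum_empty]

lemma harsanyiDividend_ite_subset (K S : Finset ι) (c : R) :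
    harsanyiDividend (fun T => if K ⊆ T then c else 0) S = if K = S then c else 0 := by
  simp only [harsanyiDividend, mul_ite, mul_zero, ← sum_filter, ← sum_mul,
    sum_powerset_superset_neg_one_pow_card_sub_eq_ite, ite_mul, one_mul, zero_mul]

end Dividend

lemma prod_mask_sub_pow {n : ℕ} (x b : Fin n → ℝ) (T : Finset (Fin n)) (κ : Fin n → ℕ) :
    ∏ i, (mask x b T i - b i) ^ κ i =
      if ({i | 0 < κ i} : Finset (Fin n)) ⊆ T then ∏ i, (x i - b i) ^ κ i else 0 := by
  split_ifs with h
  · refine prod_congr rfl fun i _ => ?_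
    by_cases hiT : i ∈ T
    · simp [mask, hiT]
    · have : κ i = 0 := Nat.eq_zero_of_not_pos fun hκ => hiT (h (by simpa using hκ))
      simp [this]
  · obtain ⟨i, hiκ, hiT⟩ := not_subset.1 h
    exact prod_eq_zero (mem_univ i) (by simp_all [mask, (mem_filter.1 hiκ).2.ne'])

/-- Theorem 1, Eq. (5): for a (finite) Taylor expansion of `v` at the baseline `b` with
coefficients `a κ` (i.e. `v(y) = Σ_κ a κ · Π_i (y_i − b_i)^{κ_i}`), the Harsanyi dividend
of the masked inputs equals the sum of Taylor terms whose degree vectors are supported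
exactly on `S`. -/
theorem harsanyi_taylor {n : ℕ} (a : (Fin n → ℕ) →₀ ℝ) (b x : Fin n → ℝ)
    (v : (Fin n → ℝ) → ℝ)
    (hv : ∀ y : Fin n → ℝ, v y = ∑ κ ∈ a.support, a κ * ∏ i, (y i - b i) ^ (κ i))
    (S : Finset (Fin n)) :
    ∑ T ∈ S.powerset, (-1 : ℝ) ^ (S.card - T.card) * v (mask x b T) =
      ∑ κ ∈ a.support.filter (fun κ => ∀ i, (0 < κ i ↔ i ∈ S)),
        a κ * ∏ i, (x i - b i) ^ (κ i) := by
  change harsanyiDividend (fun T => v (mask x b T)) S = _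
  simp only [hv, prod_mask_sub_pow, harsanyiDividend_sum,
    harsanyiDividend_ite_subset, sum_filter, mul_ite, mul_zero]
  exact sum_congr rfl fun κ _ => if_congr (by simp [Finset.ext_iff]) rfl rfl
end
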